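/- Archimedean Positivstellensatz (Putinar): Let f₁,…,f_k ∈ ℝ[x₁,…,x_d] and suppose the quadratic module Q(f) generated by f₁,…,f_k is Archimedean, i.e. there exists λ > 0 such that λ − (x₁² + ⋯ + x_d²) ∈ Q(f). If h ∈ ℝ[x₁,…,x_d] satisfies h(x) > 0 for all x in the basic closed semi-algebraic set K(f), then h ∈ Q(f). -/
import Mathlib


/-- A sum of squares of polynomials. -/
def IsSOS {d : ℕ} (p : MvPolynomial (Fin d) ℝ) : Prop :=
  ∃ (n : ℕ) (q : Fin n → MvPolynomial (Fin d) ℝ), p = ∑ i, (q i) ^ 2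

/-- Membership in the quadratic module `Q(f)` generated by `f 0, …, f (k-1)`. -/
def InQuadraticModule {d k : ℕ} (f : Fin k → MvPolynomial (Fin d) ℝ)
    (p : MvPolynomial (Fin d) ℝ) : Prop :=
  ∃ (σ₀ : MvPolynomial (Fin d) ℝ) (σ : Fin k → MvPolynomial (Fin d) ℝ),
    IsSOS σ₀ ∧ (∀ i, IsSOS (σ i)) ∧ p = σ₀ + ∑ i, f i * σ i

/-- The basic closed semi-algebraic set `K(f)`. -/
def SemiAlgSet {d k : ℕ} (f : Fin k → MvPolynomial (Fin d) ℝ) : Set (Fin d → ℝ) :=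
  {x | ∀ i, 0 ≤ MvPolynomial.eval x (f i)}

namespace PutinarAux

open MvPolynomial

variable {d : ℕ}

theorem sos_zero : IsSOS (0 : MvPolynomial (Fin d) ℝ) :=
  ⟨0, fun i => 0, by simp⟩

theorem sos_sq (p : MvPolynomial (Fin d) ℝ) : IsSOS (p ^ 2) :=
  ⟨1, fun _ => p, by simp⟩

theorem sos_one : IsSOS (1 : MvPolynomial (Fin d) ℝ) := by
  simpa using sos_sq (1 : MvPolynomial (Fin d) ℝ)

theorem sos_add {p q : MvPolynomial (Fin d) ℝ} (hp : IsSOS p) (hq : IsSOS q) :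
    IsSOS (p + q) := by
  obtain ⟨n, u, rfl⟩ := hp
  obtain ⟨m, v, rfl⟩ := hq
  refine ⟨n + m, Fin.addCases u v, ?_⟩
  rw [Fin.sum_univ_add]
  simp

theorem sos_C {c : ℝ} (hc : 0 ≤ c) : IsSOS (C c : MvPolynomial (Fin d) ℝ) := by
  refine ⟨1, fun _ => C (Real.sqrt c), ?_⟩
  simp [← map_pow, Real.sq_sqrt hc]

theorem sos_sq_mul (p : MvPolynomial (Fin d) ℝ) {q : MvPolynomial (Fin d) ℝ}
    (hq : IsSOS q) : IsSOS (p ^ 2 * q) := by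
  obtain ⟨m, v, rfl⟩ := hq
  refine ⟨m, fun i => p * v i, ?_⟩
  rw [Finset.mul_sum]
  simp [mul_pow]

theorem sos_mul {p q : MvPolynomial (Fin d) ℝ} (hp : IsSOS p) (hq : IsSOS q) :
    IsSOS (p * q) := by
  obtain ⟨n, u, rfl⟩ := hp
  induction n with
  | zero => simpa using sos_zero
  | succ n ih =>
      rw [Fin.sum_univ_succ, add_mul]
      exact sos_add (sos_sq_mul _ hq) (ih _)

theorem sos_smul {c : ℝ} (hc : 0 ≤ c) {p : MvPolynomial (Fin d) ℝ} (hp : IsSOS p) :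
    IsSOS (C c * p) := sos_mul (sos_C hc) hp

theorem sos_sum {n : ℕ} {g : Fin n → MvPolynomial (Fin d) ℝ}
    (hg : ∀ i, IsSOS (g i)) : IsSOS (∑ i, g i) := by
  induction n with
  | zero => simpa using sos_zero
  | succ n ih =>
      rw [Fin.sum_univ_succ]
      exact sos_add (hg 0) (ih fun i => hg i.succ)

end PutinarAux

namespace PutinarAux

open MvPolynomial

variable {d k : ℕ}

/-- Abstract quadratic module structure on a set of polynomials. -/
def IsQM (S : Set (MvPolynomial (Fin d) ℝ)) : Prop :=
  (∀ p ∈ S, ∀ q ∈ S, p + q ∈ S) ∧ (∀ τ, IsSOS τ → τ ∈ S) ∧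
    (∀ τ, IsSOS τ → ∀ p ∈ S, τ * p ∈ S)

namespace IsQM

variable {S : Set (MvPolynomial (Fin d) ℝ)} (hS : IsQM S)
include hS

theorem add {p q : MvPolynomial (Fin d) ℝ} (hp : p ∈ S) (hq : q ∈ S) : p + q ∈ S :=
  hS.1 p hp q hq

theorem sos {p : MvPolynomial (Fin d) ℝ} (hp : IsSOS p) : p ∈ S := hS.2.1 p hp

theorem sos_mul' {τ p : MvPolynomial (Fin d) ℝ} (hτ : IsSOS τ) (hp : p ∈ S) :
    τ * p ∈ S := hS.2.2 τ hτ p hp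

theorem zero : (0 : MvPolynomial (Fin d) ℝ) ∈ S := hS.sos sos_zero

theorem one : (1 : MvPolynomial (Fin d) ℝ) ∈ S := hS.sos sos_one

theorem const {c : ℝ} (hc : 0 ≤ c) : (C c : MvPolynomial (Fin d) ℝ) ∈ S :=
  hS.sos (sos_C hc)

theorem sq (p : MvPolynomial (Fin d) ℝ) : p ^ 2 ∈ S := hS.sos (sos_sq p)

theorem smul {c : ℝ} (hc : 0 ≤ c) {p : MvPolynomial (Fin d) ℝ} (hp : p ∈ S) :
    C c * p ∈ S := hS.sos_mul' (sos_C hc) hp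

set_option linter.unusedSectionVars false in
theorem of_eq {p q : MvPolynomial (Fin d) ℝ} (hp : p ∈ S) (h : q = p) : q ∈ S :=
  h ▸ hp

theorem add3 {p q r : MvPolynomial (Fin d) ℝ} (hp : p ∈ S) (hq : q ∈ S) (hr : r ∈ S) :
    p + q + r ∈ S := hS.add (hS.add hp hq) hr

end IsQM

section M

variable (f : Fin k → MvPolynomial (Fin d) ℝ)

/-- The quadratic module generated by `f` as a set. -/
def Mset : Set (MvPolynomial (Fin d) ℝ) := {p | InQuadraticModule f p}

theorem Mset_isQM : IsQM (Mset f) := by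
  refine ⟨?_, ?_, ?_⟩
  · rintro p ⟨σ₀, σ, h0, h1, rfl⟩ q ⟨τ₀, τ, g0, g1, rfl⟩
    exact ⟨σ₀ + τ₀, fun i => σ i + τ i, sos_add h0 g0,
      fun i => sos_add (h1 i) (g1 i), by rw [Finset.sum_congr rfl fun i _ => mul_add (f i) (σ i) (τ i), Finset.sum_add_distrib]; ring⟩
  · intro τ hτ
    exact ⟨τ, fun _ => 0, hτ, fun _ => sos_zero, by simp⟩
  · rintro τ hτ p ⟨σ₀, σ, h0, h1, rfl⟩
    refine ⟨τ * σ₀, fun i => τ * σ i, sos_mul hτ h0, fun i => sos_mul hτ (h1 i), ?_⟩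
    rw [mul_add, Finset.mul_sum]
    exact congrArg _ (Finset.sum_congr rfl fun i _ => by ring)

theorem Mset_gen (i : Fin k) : f i ∈ Mset f := by
  refine ⟨0, fun j => if j = i then 1 else 0, sos_zero, ?_, ?_⟩
  · intro j; by_cases hj : j = i <;> simp [hj, sos_one, sos_zero]
  · rw [zero_add]
    rw [Finset.sum_congr rfl (fun j _ => by
      by_cases hj : j = i <;> simp [hj] : ∀ j ∈ Finset.univ, f j * (if j = i then 1 else 0) = if j = i then f i else 0)]
    simp

end M

end PutinarAux

namespace PutinarAux

open MvPolynomial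

variable {d k : ℕ}

theorem sos_finsetSum {α : Type*} (s : Finset α) (g : α → MvPolynomial (Fin d) ℝ)
    (hg : ∀ i ∈ s, IsSOS (g i)) : IsSOS (∑ i ∈ s, g i) :=
  Finset.sum_induction g IsSOS (fun _ _ ha hb => sos_add ha hb) sos_zero hg

theorem C_half_two : (C (2⁻¹ : ℝ) : MvPolynomial (Fin d) ℝ) * 2 = 1 := by
  rw [show (2 : MvPolynomial (Fin d) ℝ) = C 2 from (map_ofNat C 2).symm, ← map_mul]
  norm_num

section Arch

variable {f : Fin k → MvPolynomial (Fin d) ℝ}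

/-- `p` is bounded w.r.t. the quadratic module. -/
def Bnd (f : Fin k → MvPolynomial (Fin d) ℝ) (p : MvPolynomial (Fin d) ℝ) : Prop :=
  ∃ N : ℝ, 0 < N ∧ C N - p ^ 2 ∈ Mset f

theorem bnd_C (r : ℝ) : Bnd f (C r) := by
  refine ⟨r ^ 2 + 1, by positivity, ?_⟩
  have : (C (r ^ 2 + 1) : MvPolynomial (Fin d) ℝ) - (C r) ^ 2 = C 1 := by
    rw [map_add, ← map_pow]; ring
  rw [this]
  exact (Mset_isQM f).const one_pos.le

theorem bnd_X
    (harch : ∃ lam : ℝ, 0 < lam ∧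
      (C lam - ∑ j : Fin d, (X j : MvPolynomial (Fin d) ℝ) ^ 2) ∈ Mset f)
    (j : Fin d) : Bnd f (X j) := by
  obtain ⟨lam, hlam, hmem⟩ := harch
  refine ⟨lam, hlam, ?_⟩
  have h2 : (∑ j' ∈ Finset.univ.erase j, (X j' : MvPolynomial (Fin d) ℝ) ^ 2) ∈ Mset f :=
    (Mset_isQM f).sos (sos_finsetSum _ _ fun i _ => sos_sq _)
  refine (Mset_isQM f).of_eq ((Mset_isQM f).add hmem h2) ?_
  rw [← Finset.sum_erase_add Finset.univ _ (Finset.mem_univ j)]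
  ring

theorem bnd_add {p q : MvPolynomial (Fin d) ℝ} (hp : Bnd f p) (hq : Bnd f q) :
    Bnd f (p + q) := by
  obtain ⟨N, hN, hNm⟩ := hp
  obtain ⟨N', hN', hN'm⟩ := hq
  have hQ := Mset_isQM f
  refine ⟨2 * N + 2 * N', by positivity, ?_⟩
  have c1 := hQ.smul (by norm_num : (0:ℝ) ≤ 2) hNm
  have c2 := hQ.smul (by norm_num : (0:ℝ) ≤ 2) hN'm
  refine hQ.of_eq (hQ.add3 c1 c2 (hQ.sq (p - q))) ?_
  rw [map_add, map_mul, map_mul, map_ofNat]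
  ring

theorem bnd_mul {p q : MvPolynomial (Fin d) ℝ} (hp : Bnd f p) (hq : Bnd f q) :
    Bnd f (p * q) := by
  obtain ⟨N, hN, hNm⟩ := hp
  obtain ⟨N', hN', hN'm⟩ := hq
  have hQ := Mset_isQM f
  refine ⟨N * N', by positivity, ?_⟩
  refine hQ.of_eq (hQ.add (hQ.sos_mul' (sos_sq q) hNm) (hQ.smul hN.le hN'm)) ?_
  rw [map_mul]
  ring

theorem arch_of_bnd {p : MvPolynomial (Fin d) ℝ} (hp : Bnd f p) :
    ∃ N : ℝ, 1 ≤ N ∧ (C N - p ∈ Mset f) ∧ (C N + p ∈ Mset f) := by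
  obtain ⟨N, hN, hNm⟩ := hp
  have hQ := Mset_isQM f
  set N₀ : ℝ := max ((N + 1) / 2) 1 with hN₀
  have hle : (N + 1) / 2 ≤ N₀ := le_max_left _ _
  refine ⟨N₀, le_max_right _ _, ?_, ?_⟩
  · have key : (C ((N+1)/2) : MvPolynomial (Fin d) ℝ) - p ∈ Mset f := by
      have := hQ.smul (by norm_num : (0:ℝ) ≤ 2⁻¹) (hQ.add (hQ.sq (p - 1)) hNm)
      refine hQ.of_eq this ?_
      rw [show (N+1)/2 = 2⁻¹ * N + 2⁻¹ by ring, map_add, map_mul]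
      linear_combination (p : MvPolynomial (Fin d) ℝ) * C_half_two
    refine hQ.of_eq (hQ.add key (hQ.const (by linarith : (0:ℝ) ≤ N₀ - (N+1)/2))) ?_
    rw [map_sub]
    ring
  · have key : (C ((N+1)/2) : MvPolynomial (Fin d) ℝ) + p ∈ Mset f := by
      have := hQ.smul (by norm_num : (0:ℝ) ≤ 2⁻¹) (hQ.add (hQ.sq (p + 1)) hNm)
      refine hQ.of_eq this ?_
      rw [show (N+1)/2 = 2⁻¹ * N + 2⁻¹ by ring, map_add, map_mul]
      linear_combination (-p : MvPolynomial (Fin d) ℝ) * C_half_two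
    refine hQ.of_eq (hQ.add key (hQ.const (by linarith : (0:ℝ) ≤ N₀ - (N+1)/2))) ?_
    rw [map_sub]
    ring

theorem arch
    (harch : ∃ lam : ℝ, 0 < lam ∧
      (C lam - ∑ j : Fin d, (X j : MvPolynomial (Fin d) ℝ) ^ 2) ∈ Mset f)
    (p : MvPolynomial (Fin d) ℝ) :
    ∃ N : ℝ, 1 ≤ N ∧ (C N - p ∈ Mset f) ∧ (C N + p ∈ Mset f) := by
  refine arch_of_bnd ?_
  induction p using MvPolynomial.induction_on with
  | C a => exact bnd_C a
  | add p q hp hq => exact bnd_add hp hq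
  | mul_X p j hp => exact bnd_mul hp (bnd_X harch j)

end Arch

end PutinarAux

namespace PutinarAux

open MvPolynomial

variable {d k : ℕ} {f : Fin k → MvPolynomial (Fin d) ℝ}

/-- Putinar's key computational lemma: if `s*a ≥ 1` with `s` a sum of squares, then
`a` is bounded below by a positive constant modulo the quadratic module. -/
theorem key_lemma
    (harch : ∃ lam : ℝ, 0 < lam ∧
      (C lam - ∑ j : Fin d, (X j : MvPolynomial (Fin d) ℝ) ^ 2) ∈ Mset f)
    {a s : MvPolynomial (Fin d) ℝ} (hs : IsSOS s) (hsa : s * a - 1 ∈ Mset f) :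
    ∃ δ : ℝ, 0 < δ ∧ a - C δ ∈ Mset f := by
  have hQ := Mset_isQM f
  obtain ⟨N, hN1, hNa, hNa'⟩ := arch harch a
  obtain ⟨ν, hν1, hνs, hνs'⟩ := arch harch s
  have hN0 : (0:ℝ) < N := lt_of_lt_of_le one_pos hN1
  have hν0 : (0:ℝ) < ν := lt_of_lt_of_le one_pos hν1
  set η : ℝ := N⁻¹ with hηdef
  set μ : ℝ := ν⁻¹ with hμdef
  have hη0 : 0 < η := by positivity
  have hμ0 : 0 < μ := by positivity
  have hη1 : η ≤ 1 := by rw [hηdef]; exact inv_le_one_of_one_le₀ hN1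
  have hμ1 : μ ≤ 1 := by rw [hμdef]; exact inv_le_one_of_one_le₀ hν1
  have hηN : (C η : MvPolynomial (Fin d) ℝ) * C N = 1 := by
    rw [← map_mul, inv_mul_cancel₀ hN0.ne', map_one]
  have hμν : (C μ : MvPolynomial (Fin d) ℝ) * C ν = 1 := by
    rw [← map_mul, inv_mul_cancel₀ hν0.ne', map_one]
  -- F1 : s ⪰ η
  have F1 : s - C η ∈ Mset f := by
    have t1 : s * (C N - a) ∈ Mset f := hQ.sos_mul' hs hNa
    have t2 : s * C N - 1 ∈ Mset f := hQ.of_eq (hQ.add t1 hsa) (by ring)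
    refine hQ.of_eq (hQ.smul hη0.le t2) ?_
    linear_combination (-s : MvPolynomial (Fin d) ℝ) * hηN
  set w : MvPolynomial (Fin d) ℝ := 1 - C μ * s with hwdef
  -- F2 : w ∈ M
  have F2 : w ∈ Mset f := by
    refine hQ.of_eq (hQ.smul hμ0.le hνs) ?_
    rw [hwdef]
    linear_combination -hμν
  set ρ : ℝ := 1 - μ * η with hρdef
  have hρ0 : 0 ≤ ρ := by
    have : μ * η ≤ 1 := mul_le_one₀ hμ1 hη0.le hη1
    rw [hρdef]; linarith
  have hρ1 : ρ < 1 := by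
    have : 0 < μ * η := mul_pos hμ0 hη0
    rw [hρdef]; linarith
  -- F3 : w² ⪯ ρ
  have F3 : C ρ - w ^ 2 ∈ Mset f := by
    refine hQ.of_eq (hQ.add (hQ.smul hμ0.le (hQ.sos_mul' hs F2)) (hQ.smul hμ0.le F1)) ?_
    rw [hρdef, hwdef, map_sub, map_mul, map_one]
    ring
  -- F4 : w^(2i) ⪯ ρ^i
  have F4 : ∀ i : ℕ, C (ρ ^ i) - w ^ (2 * i) ∈ Mset f := by
    intro i
    induction i with
    | zero => exact hQ.of_eq hQ.zero (by simp)
    | succ i ih =>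
        refine hQ.of_eq (hQ.add (hQ.sos_mul' (sos_sq w) ih)
          (hQ.smul (pow_nonneg hρ0 i) F3)) ?_
        rw [pow_succ, map_mul]
        ring
  -- the polynomial g
  set g : MvPolynomial (Fin d) ℝ := a - C (2⁻¹ * μ) * (s * a) with hgdef
  have hsa1 : s * a ∈ Mset f := hQ.of_eq (hQ.add hsa hQ.one) (by ring)
  have hc2 : (C μ : MvPolynomial (Fin d) ℝ) = 2 * C (2⁻¹ * μ) := by
    rw [show (2 : MvPolynomial (Fin d) ℝ) = C 2 from (map_ofNat C 2).symm, ← map_mul]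
    congr 1
    ring
  -- F5 : a - μ/2 - g·w^(2m) ∈ M by induction on m
  have F5 : ∀ m : ℕ, a - C (2⁻¹ * μ) - g * w ^ (2 * m) ∈ Mset f := by
    intro m
    induction m with
    | zero =>
        refine hQ.of_eq (hQ.smul (by positivity : (0:ℝ) ≤ 2⁻¹ * μ) hsa) ?_
        rw [hgdef]
        ring
    | succ m ih =>
        have T : C (2⁻¹ * μ) * ((w ^ m * (1 + w)) ^ 2 * (s * a)) ∈ Mset f :=
          hQ.smul (by positivity) (hQ.sos_mul' (sos_sq _) hsa1)
        refine hQ.of_eq (hQ.add ih T) ?_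
        rw [hgdef, hwdef]
        linear_combination (s * a * (2 - C μ * s) * (1 - C μ * s) ^ (2*m) :
          MvPolynomial (Fin d) ℝ) * hc2
  -- bound on g from below
  obtain ⟨γ, hγ1, _, hγm⟩ := arch harch g
  have hγ0 : (0:ℝ) < γ := lt_of_lt_of_le one_pos hγ1
  have F6 : ∀ m : ℕ, g * w ^ (2 * m) + C (γ * ρ ^ m) ∈ Mset f := by
    intro m
    have t1 : (w ^ m) ^ 2 * (g + C γ) ∈ Mset f :=
      hQ.sos_mul' (sos_sq _) (hQ.of_eq hγm (by ring))
    refine hQ.of_eq (hQ.add t1 (hQ.smul hγ0.le (F4 m))) ?_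
    rw [map_mul]
    ring
  -- choose m with γ·ρ^m < μ/4
  have hlim := tendsto_pow_atTop_nhds_zero_of_lt_one hρ0 hρ1
  have hev : ∀ᶠ m : ℕ in Filter.atTop, ρ ^ m < 4⁻¹ * μ / γ :=
    hlim.eventually (gt_mem_nhds (by positivity))
  obtain ⟨m, hm⟩ := hev.exists
  have hmsmall : γ * ρ ^ m < 4⁻¹ * μ := by
    have := (mul_lt_mul_iff_right₀ hγ0).2 hm
    rwa [mul_div_cancel₀ _ hγ0.ne'] at this
  refine ⟨4⁻¹ * μ, by positivity, ?_⟩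
  have main : a - C (2⁻¹ * μ) + C (γ * ρ ^ m) ∈ Mset f :=
    hQ.of_eq (hQ.add (F5 m) (F6 m)) (by ring)
  refine hQ.of_eq (hQ.add main (hQ.const (by linarith : (0:ℝ) ≤ 2⁻¹ * μ - 4⁻¹ * μ - γ * ρ ^ m))) ?_
  have hC : (C (4⁻¹ * μ) : MvPolynomial (Fin d) ℝ)
      = C (2⁻¹ * μ) - C (γ * ρ ^ m) - C (2⁻¹ * μ - 4⁻¹ * μ - γ * ρ ^ m) := by
    rw [← map_sub, ← map_sub]
    congr 1
    ring
  rw [hC]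
  ring

end PutinarAux

namespace PutinarAux

open MvPolynomial

variable {d k : ℕ}

/-- A maximal proper quadratic module over `Q(f)`. -/
structure MaxQM (f : Fin k → MvPolynomial (Fin d) ℝ) where
  S : Set (MvPolynomial (Fin d) ℝ)
  qm : IsQM S
  hM : Mset f ⊆ S
  h1 : (-1 : MvPolynomial (Fin d) ℝ) ∉ S
  hmax : ∀ p, p ∉ S → ∃ m ∈ S, ∃ σ, IsSOS σ ∧ (-1 : MvPolynomial (Fin d) ℝ) = m + σ * p

namespace MaxQM

variable {f : Fin k → MvPolynomial (Fin d) ℝ} (T : MaxQM f)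

theorem const_nonneg {c : ℝ} (hc : C c ∈ T.S) : 0 ≤ c := by
  by_contra hneg
  push_neg at hneg
  have h2 : ((-c)⁻¹ : ℝ) ≥ 0 := inv_nonneg.2 (by linarith)
  have h3 : C ((-c)⁻¹) * C c ∈ T.S := T.qm.smul h2 hc
  refine T.h1 (T.qm.of_eq h3 ?_)
  rw [← map_mul]
  rw [show (-c)⁻¹ * c = -1 by
    rw [inv_neg, neg_mul, inv_mul_cancel₀ (ne_of_lt hneg)]]
  rw [map_neg, map_one]

theorem neg_one_ne : ∀ p ∈ T.S, p ≠ -1 := fun p hp he => T.h1 (he ▸ hp)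

/-- union property : `S ∪ -S` is everything. -/
theorem union (p : MvPolynomial (Fin d) ℝ) : p ∈ T.S ∨ -p ∈ T.S := by
  by_contra hcon
  push_neg at hcon
  obtain ⟨hp, hnp⟩ := hcon
  obtain ⟨m₁, hm₁, σ₁, hσ₁, eq1⟩ := T.hmax p hp
  obtain ⟨m₂, hm₂, σ₂, hσ₂, eq2⟩ := T.hmax (-p) hnp
  -- c = σ₁ σ₂ p lies in the support
  have hc2 : σ₁ * σ₂ * p ∈ T.S := by
    refine T.qm.of_eq (T.qm.add (T.qm.sos hσ₁) (T.qm.sos_mul' hσ₁ hm₂)) ?_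
    linear_combination (σ₁ : MvPolynomial (Fin d) ℝ) * eq2
  -- -σ₂ ∈ S
  have hnσ₂ : -σ₂ ∈ T.S := by
    refine T.qm.of_eq (T.qm.add (T.qm.sos_mul' hσ₂ hm₁) hc2) ?_
    linear_combination (σ₂ : MvPolynomial (Fin d) ℝ) * eq1
  -- then -σ₂ * p ∈ S via half squares
  have hms : -(σ₂ * p) ∈ T.S := by
    refine T.qm.of_eq (T.qm.add
      (T.qm.sos_mul' (sos_sq ((p - 1) * C 2⁻¹)) (T.qm.sos hσ₂))
      (T.qm.sos_mul' (sos_sq ((p + 1) * C 2⁻¹)) hnσ₂)) ?_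
    linear_combination (σ₂ * p * (C 2⁻¹ * 2 + 1) : MvPolynomial (Fin d) ℝ) * C_half_two
  refine T.h1 (T.qm.of_eq (T.qm.add hm₂ hms) ?_)
  linear_combination eq2
/-- `S` is closed under small constant perturbations. -/
theorem closed
    (harch : ∃ lam : ℝ, 0 < lam ∧
      (C lam - ∑ j : Fin d, (X j : MvPolynomial (Fin d) ℝ) ^ 2) ∈ Mset f)
    {p : MvPolynomial (Fin d) ℝ} (hp : ∀ ε : ℝ, 0 < ε → p + C ε ∈ T.S) :
    p ∈ T.S := by
  by_contra hpn
  obtain ⟨m, hm, σ, hσ, eq1⟩ := T.hmax p hpn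
  obtain ⟨κ, hκ1, hκm, _⟩ := arch harch σ
  have hκ0 : (0:ℝ) < κ := lt_of_lt_of_le one_pos hκ1
  set ε : ℝ := (2 * κ)⁻¹ with hεdef
  have hε0 : 0 < ε := by positivity
  have h1 : m + σ * (p + C ε) ∈ T.S := T.qm.add hm (T.qm.sos_mul' hσ (hp ε hε0))
  have h2 : C ε * (C κ - σ) ∈ T.S := T.qm.smul hε0.le (T.hM hκm)
  have hconst : (C ε : MvPolynomial (Fin d) ℝ) * C κ = C 2⁻¹ := by
    rw [← map_mul]
    congr 1
    rw [hεdef]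
    field_simp
  have : C (-2⁻¹ : ℝ) ∈ T.S := by
    refine T.qm.of_eq (T.qm.add h1 h2) ?_
    rw [map_neg]
    linear_combination eq1 - hconst - C_half_two
  have := T.const_nonneg this
  norm_num at this

/-- The state associated to `T`. -/
noncomputable def phi (p : MvPolynomial (Fin d) ℝ) : ℝ :=
  sSup {r : ℝ | p - C r ∈ T.S}

section Phi

variable (harch : ∃ lam : ℝ, 0 < lam ∧
      (C lam - ∑ j : Fin d, (X j : MvPolynomial (Fin d) ℝ) ^ 2) ∈ Mset f)

include harch

theorem Eset_nonempty (p : MvPolynomial (Fin d) ℝ) :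
    {r : ℝ | p - C r ∈ T.S}.Nonempty := by
  obtain ⟨N, _, _, hNp⟩ := arch harch p
  exact ⟨-N, T.qm.of_eq (T.hM hNp) (by rw [map_neg]; ring)⟩

theorem Eset_bdd (p : MvPolynomial (Fin d) ℝ) :
    BddAbove {r : ℝ | p - C r ∈ T.S} := by
  obtain ⟨N, _, hNp, _⟩ := arch harch p
  refine ⟨N, fun r hr => ?_⟩
  have : C (N - r) ∈ T.S := T.qm.of_eq (T.qm.add hr (T.hM hNp)) (by rw [map_sub]; ring)
  linarith [T.const_nonneg this]

theorem le_phi {p : MvPolynomial (Fin d) ℝ} {r : ℝ} (hr : p - C r ∈ T.S) :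
    r ≤ T.phi p := le_csSup (T.Eset_bdd harch p) hr

theorem mem_of_lt_phi {p : MvPolynomial (Fin d) ℝ} {r : ℝ} (hr : r < T.phi p) :
    p - C r ∈ T.S := by
  obtain ⟨r', hr', hlt⟩ := exists_lt_of_lt_csSup (T.Eset_nonempty harch p) hr
  refine T.qm.of_eq (T.qm.add hr' (T.qm.const (by linarith : (0:ℝ) ≤ r' - r))) ?_
  rw [map_sub]
  ring

theorem phi_nonneg {p : MvPolynomial (Fin d) ℝ} (hp : p ∈ T.S) : 0 ≤ T.phi p :=
  T.le_phi harch (by rw [map_zero, sub_zero]; exact hp)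

theorem phi_le {p : MvPolynomial (Fin d) ℝ} {r : ℝ}
    (h : ∀ t ∈ {r : ℝ | p - C r ∈ T.S}, t ≤ r) : T.phi p ≤ r :=
  csSup_le (T.Eset_nonempty harch p) h

theorem phi_add (p q : MvPolynomial (Fin d) ℝ) :
    T.phi (p + q) = T.phi p + T.phi q := by
  refine le_antisymm ?_ ?_
  · refine T.phi_le harch fun r hr => ?_
    by_contra hc
    push_neg at hc
    set t : ℝ := (T.phi p + (r - T.phi q)) / 2 with htdef
    have ht1 : T.phi p < t := by rw [htdef]; linarith
    have ht2 : t < r - T.phi q := by rw [htdef]; linarith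
    have hnt : p - C t ∉ T.S := fun hmem => absurd (T.le_phi harch hmem) (not_le.2 ht1)
    have hneg : C t - p ∈ T.S := by
      rcases T.union (p - C t) with h | h
      · exact absurd h hnt
      · exact T.qm.of_eq h (by ring)
    have : q - C (r - t) ∈ T.S :=
      T.qm.of_eq (T.qm.add hr hneg) (by rw [map_sub]; ring)
    have := T.le_phi harch this
    linarith
  · by_contra hc
    push_neg at hc
    set ε : ℝ := (T.phi p + T.phi q - T.phi (p + q)) / 2 with hεdef
    have hε0 : 0 < ε := by rw [hεdef]; linarith
    have h1 : p - C (T.phi p - ε / 2) ∈ T.S := T.mem_of_lt_phi harch (by linarith)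
    have h2 : q - C (T.phi q - ε / 2) ∈ T.S := T.mem_of_lt_phi harch (by linarith)
    have h3 : (p + q) - C (T.phi p + T.phi q - ε) ∈ T.S := by
      refine T.qm.of_eq (T.qm.add h1 h2) ?_
      have hCe : (C (ε/2) : MvPolynomial (Fin d) ℝ) + C (ε/2) = C ε := by
        rw [← map_add]; congr 1; ring
      simp only [map_sub, map_add]
      linear_combination -hCe
    have := T.le_phi harch h3
    linarith

theorem phi_C (c : ℝ) : T.phi (C c) = c := by
  refine le_antisymm (T.phi_le harch fun t ht => ?_) (T.le_phi harch ?_)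
  · have : (C (c - t) : MvPolynomial (Fin d) ℝ) ∈ T.S :=
      T.qm.of_eq ht (by rw [map_sub])
    linarith [T.const_nonneg this]
  · rw [sub_self]
    exact T.qm.zero

theorem phi_zero : T.phi (0 : MvPolynomial (Fin d) ℝ) = 0 := by
  rw [← map_zero (C : ℝ →+* MvPolynomial (Fin d) ℝ), T.phi_C harch]

theorem phi_neg (p : MvPolynomial (Fin d) ℝ) : T.phi (-p) = -T.phi p := by
  have := T.phi_add harch p (-p)
  rw [add_neg_cancel, T.phi_zero harch] at this
  linarith

theorem supp_mem (p : MvPolynomial (Fin d) ℝ) :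
    p - C (T.phi p) ∈ T.S ∧ -(p - C (T.phi p)) ∈ T.S := by
  have key : ∀ q : MvPolynomial (Fin d) ℝ, q - C (T.phi q) ∈ T.S := by
    intro q
    refine T.closed harch fun ε hε => ?_
    refine T.qm.of_eq (T.mem_of_lt_phi harch (show T.phi q - ε < T.phi q by linarith)) ?_
    rw [map_sub]
    ring
  refine ⟨key p, ?_⟩
  have := key (-p)
  rw [T.phi_neg harch, map_neg] at this
  exact T.qm.of_eq this (by ring)

omit harch in
theorem supp_mul {x : MvPolynomial (Fin d) ℝ} (hx : x ∈ T.S) (hnx : -x ∈ T.S)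
    (p : MvPolynomial (Fin d) ℝ) : p * x ∈ T.S ∧ -(p * x) ∈ T.S := by
  constructor
  · refine T.qm.of_eq (T.qm.add
      (T.qm.sos_mul' (sos_sq ((p + 1) * C 2⁻¹)) hx)
      (T.qm.sos_mul' (sos_sq ((p - 1) * C 2⁻¹)) hnx)) ?_
    linear_combination (-(p * x) * (C 2⁻¹ * 2 + 1) : MvPolynomial (Fin d) ℝ) * C_half_two
  · refine T.qm.of_eq (T.qm.add
      (T.qm.sos_mul' (sos_sq ((p - 1) * C 2⁻¹)) hx)
      (T.qm.sos_mul' (sos_sq ((p + 1) * C 2⁻¹)) hnx)) ?_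
    linear_combination ((p * x) * (C 2⁻¹ * 2 + 1) : MvPolynomial (Fin d) ℝ) * C_half_two

theorem phi_supp {x : MvPolynomial (Fin d) ℝ} (hx : x ∈ T.S) (hnx : -x ∈ T.S) :
    T.phi x = 0 := by
  have h1 := T.phi_nonneg harch hx
  have h2 := T.phi_nonneg harch hnx
  rw [T.phi_neg harch] at h2
  linarith

theorem phi_mul (p q : MvPolynomial (Fin d) ℝ) :
    T.phi (p * q) = T.phi p * T.phi q := by
  obtain ⟨hdp, hndp⟩ := T.supp_mem harch p
  obtain ⟨hdq, hndq⟩ := T.supp_mem harch q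
  set dp := p - C (T.phi p) with hdpdef
  set dq := q - C (T.phi q) with hdqdef
  set i : MvPolynomial (Fin d) ℝ := C (T.phi p) * dq + C (T.phi q) * dp + dp * dq with hidef
  have h1 := T.supp_mul hdq hndq (C (T.phi p))
  have h2 := T.supp_mul hdp hndp (C (T.phi q))
  have h3 := T.supp_mul hdq hndq dp
  have hi : i ∈ T.S := T.qm.add3 h1.1 h2.1 h3.1
  have hni : -i ∈ T.S := T.qm.of_eq (T.qm.add3 h1.2 h2.2 h3.2) (by rw [hidef]; ring)
  have hphii : T.phi i = 0 := T.phi_supp harch hi hni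
  have hexp : p * q = C (T.phi p * T.phi q) + i := by
    rw [hidef, hdpdef, hdqdef, map_mul]
    ring
  rw [hexp, T.phi_add harch, T.phi_C harch, hphii, add_zero]

/-- The point of `K(f)` associated to `T`. -/
noncomputable def pt : Fin d → ℝ := fun j => T.phi (X j)

theorem phi_eval (p : MvPolynomial (Fin d) ℝ) : eval (T.pt) p = T.phi p := by
  induction p using MvPolynomial.induction_on with
  | C c => rw [eval_C, T.phi_C harch]
  | add p q hp hq => rw [map_add, T.phi_add harch, hp, hq]
  | mul_X p j hp => rw [map_mul, T.phi_mul harch, hp, eval_X]; rfl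

theorem pt_mem (i : Fin k) : 0 ≤ eval (T.pt) (f i) := by
  rw [T.phi_eval harch]
  exact T.phi_nonneg harch (T.hM (Mset_gen f i))

end Phi

end MaxQM

end PutinarAux

namespace PutinarAux

open MvPolynomial

variable {d k : ℕ} {f : Fin k → MvPolynomial (Fin d) ℝ}

theorem exists_maxQM {a : MvPolynomial (Fin d) ℝ}
    (hno : ∀ σ m, IsSOS σ → m ∈ Mset f → σ * a ≠ 1 + m) :
    ∃ T : MaxQM f, -a ∈ T.S := by
  classical
  set F : Set (Set (MvPolynomial (Fin d) ℝ)) :=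
    {S | IsQM S ∧ Mset f ⊆ S ∧ -a ∈ S ∧ (-1 : MvPolynomial (Fin d) ℝ) ∉ S} with hF
  set G : Set (MvPolynomial (Fin d) ℝ) :=
    {p | ∃ m ∈ Mset f, ∃ σ, IsSOS σ ∧ p = m + σ * (-a)} with hG
  have hQ := Mset_isQM f
  have hGqm : IsQM G := by
    refine ⟨?_, ?_, ?_⟩
    · rintro p ⟨m₁, hm₁, σ₁, hσ₁, rfl⟩ q ⟨m₂, hm₂, σ₂, hσ₂, rfl⟩
      exact ⟨m₁ + m₂, hQ.add hm₁ hm₂, σ₁ + σ₂, sos_add hσ₁ hσ₂, by ring⟩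
    · intro τ hτ
      exact ⟨τ, hQ.sos hτ, 0, sos_zero, by ring⟩
    · rintro τ hτ p ⟨m, hm, σ, hσ, rfl⟩
      exact ⟨τ * m, hQ.sos_mul' hτ hm, τ * σ, sos_mul hτ hσ, by ring⟩
  have hMG : Mset f ⊆ G := fun p hp => ⟨p, hp, 0, sos_zero, by ring⟩
  have hGF : G ∈ F := by
    refine ⟨hGqm, hMG, ⟨0, hQ.zero, 1, sos_one, by ring⟩, ?_⟩
    rintro ⟨m, hm, σ, hσ, he⟩
    exact hno σ m hσ hm (by linear_combination he)
  have hchain : ∀ c ⊆ F, IsChain (· ⊆ ·) c → c.Nonempty →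
      ∃ ub ∈ F, ∀ s ∈ c, s ⊆ ub := by
    intro c hcF hch hcne
    obtain ⟨S₀, hS₀⟩ := hcne
    refine ⟨⋃₀ c, ⟨⟨?_, ?_, ?_⟩, ?_, ?_, ?_⟩, fun s hs => Set.subset_sUnion_of_mem hs⟩
    · rintro p ⟨S₁, hS₁, hp⟩ q ⟨S₂, hS₂, hq⟩
      rcases hch.total hS₁ hS₂ with hsub | hsub
      · exact ⟨S₂, hS₂, (hcF hS₂).1.add (hsub hp) hq⟩
      · exact ⟨S₁, hS₁, (hcF hS₁).1.add hp (hsub hq)⟩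
    · intro τ hτ
      exact ⟨S₀, hS₀, (hcF hS₀).1.sos hτ⟩
    · rintro τ hτ p ⟨S₁, hS₁, hp⟩
      exact ⟨S₁, hS₁, (hcF hS₁).1.sos_mul' hτ hp⟩
    · intro p hp
      exact ⟨S₀, hS₀, (hcF hS₀).2.1 hp⟩
    · exact ⟨S₀, hS₀, (hcF hS₀).2.2.1⟩
    · rintro ⟨S₁, hS₁, hmem⟩
      exact (hcF hS₁).2.2.2 hmem
  obtain ⟨Smax, hsub, hmaxl⟩ := zorn_subset_nonempty F hchain G hGF
  obtain ⟨hSqm, hSM, hSa, hS1⟩ := hmaxl.1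
  refine ⟨⟨Smax, hSqm, hSM, hS1, ?_⟩, hSa⟩
  intro p hp
  set S' : Set (MvPolynomial (Fin d) ℝ) :=
    {q | ∃ m ∈ Smax, ∃ σ, IsSOS σ ∧ q = m + σ * p} with hS'
  have hS'qm : IsQM S' := by
    refine ⟨?_, ?_, ?_⟩
    · rintro x ⟨m₁, hm₁, σ₁, hσ₁, rfl⟩ y ⟨m₂, hm₂, σ₂, hσ₂, rfl⟩
      exact ⟨m₁ + m₂, hSqm.add hm₁ hm₂, σ₁ + σ₂, sos_add hσ₁ hσ₂, by ring⟩
    · intro τ hτ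
      exact ⟨τ, hSqm.sos hτ, 0, sos_zero, by ring⟩
    · rintro τ hτ x ⟨m, hm, σ, hσ, rfl⟩
      exact ⟨τ * m, hSqm.sos_mul' hτ hm, τ * σ, sos_mul hτ hσ, by ring⟩
  have hsubS' : Smax ⊆ S' := fun q hq => ⟨q, hq, 0, sos_zero, by ring⟩
  have hpS' : p ∈ S' := ⟨0, hSqm.zero, 1, sos_one, by ring⟩
  by_cases h1 : (-1 : MvPolynomial (Fin d) ℝ) ∈ S'
  · obtain ⟨m, hm, σ, hσ, he⟩ := h1
    exact ⟨m, hm, σ, hσ, he⟩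
  · exfalso
    have hS'F : S' ∈ F :=
      ⟨hS'qm, fun q hq => hsubS' (hSM hq), hsubS' hSa, h1⟩
    exact hp (hmaxl.2 hS'F hsubS' hpS')

end PutinarAux


open MvPolynomial in
/-- Putinar's Archimedean Positivstellensatz. -/
theorem putinar_positivstellensatz {d k : ℕ} (f : Fin k → MvPolynomial (Fin d) ℝ)
    (harch : ∃ lam : ℝ, 0 < lam ∧
      InQuadraticModule f (MvPolynomial.C lam - ∑ j : Fin d, (MvPolynomial.X j) ^ 2))
    (h : MvPolynomial (Fin d) ℝ)
    (hpos : ∀ x ∈ SemiAlgSet f, 0 < MvPolynomial.eval x h) :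
    InQuadraticModule f h := by
  classical
  have hQ := PutinarAux.Mset_isQM f
  have harch' : ∃ lam : ℝ, 0 < lam ∧
      (C lam - ∑ j : Fin d, (X j : MvPolynomial (Fin d) ℝ) ^ 2) ∈ PutinarAux.Mset f := harch
  by_cases hB : ∃ σ m, IsSOS σ ∧ m ∈ PutinarAux.Mset f ∧ σ * h = 1 + m
  · obtain ⟨σ, m, hσ, hm, he⟩ := hB
    have hsa : σ * h - 1 ∈ PutinarAux.Mset f := hQ.of_eq hm (by linear_combination he)
    obtain ⟨δ, hδ0, hδ⟩ := PutinarAux.key_lemma harch' hσ hsa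
    exact hQ.of_eq (hQ.add hδ (hQ.const hδ0.le)) (by ring)
  · push_neg at hB
    have hno : ∀ σ m, IsSOS σ → m ∈ PutinarAux.Mset f → σ * h ≠ 1 + m := fun σ m h1 h2 =>
      hB σ m h1 h2
    obtain ⟨T, haT⟩ := PutinarAux.exists_maxQM hno
    exfalso
    have hx : T.pt ∈ SemiAlgSet f := fun i => T.pt_mem harch' i
    have h1 := hpos T.pt hx
    have h2 : MvPolynomial.eval T.pt h = T.phi h := T.phi_eval harch' h
    have h3 : 0 ≤ T.phi (-h) := T.phi_nonneg harch' haT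
    rw [T.phi_neg harch'] at h3
    linarith
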